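/- arXiv:2305.10633 — 4 statements merged into one kernel-verified Lean document; each statement's English description precedes it below -/
import Mathlib

section
/- The Frobenius norm of the j-fold symmetric tensor power of the identity satisfies ‖I^{⊛j}‖_F² = 1/ν_j^{(d)}, where ν_j^{(d)} = (2j-1)!! ∏_{i=0}^{j-1} 1/(d+2i). -/
open Finset

noncomputable def symTensor {d k : ℕ} (T : (Fin k → Fin d) → ℝ) : (Fin k → Fin d) → ℝ :=
  fun i => (1 / (Nat.factorial k : ℝ)) * ∑ π : Equiv.Perm (Fin k), T (i ∘ π)

def tget {d k : ℕ} [NeZero d] (i : Fin k → Fin d) (a : ℕ) : Fin d :=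
  if h : a < k then i ⟨a, h⟩ else 0

/-- The `j`-fold tensor power of the identity `I_d`, as a `2j`-tensor. -/
def idPow {d : ℕ} [NeZero d] (j : ℕ) : (Fin (2 * j) → Fin d) → ℝ :=
  fun i => ∏ b ∈ Finset.range j, (if tget i (2 * b) = tget i (2 * b + 1) then (1 : ℝ) else 0)

/-- `ν_j^{(d)} = (2j-1)!! ∏_{i=0}^{j-1} 1/(d+2i)`. -/
noncomputable def nuConst (d j : ℕ) : ℝ :=
  (Nat.doubleFactorial (2 * j - 1) : ℝ) * ∏ i ∈ Finset.range j, 1 / ((d : ℝ) + 2 * i)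

/-! ### Auxiliary definitions and lemmas -/

/-- fiber-count of a function -/
def cnt {n d : ℕ} (u : Fin n → Fin d) (w : Fin d) : ℕ := ∑ a, if u a = w then 1 else 0

lemma cnt_card {n d : ℕ} (u : Fin n → Fin d) (w : Fin d) :
    Fintype.card {a // u a = w} = cnt u w := by
  rw [Fintype.card_subtype, cnt, Finset.card_filter]

lemma sum_cnt {n d : ℕ} (u : Fin n → Fin d) : ∑ w, cnt u w = n := by
  unfold cnt
  rw [Finset.sum_comm]
  simp

def permFiberEquiv {α β : Type*} (f g : α → β) :
    {π : Equiv.Perm α // f ∘ π = g} ≃ ((w : β) → ({a // g a = w} ≃ {a // f a = w})) where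
  toFun := fun p w =>
    { toFun := fun a => ⟨p.1 a.1, by rw [show f (p.1 a.1) = g a.1 from congrFun p.2 a.1, a.2]⟩
      invFun := fun b => ⟨p.1.symm b.1, by
        rw [show g (p.1.symm b.1) = f (p.1 (p.1.symm b.1)) from (congrFun p.2 _).symm,
          Equiv.apply_symm_apply, b.2]⟩
      left_inv := fun a => Subtype.ext (p.1.symm_apply_apply a.1)
      right_inv := fun b => Subtype.ext (p.1.apply_symm_apply b.1) }
  invFun := fun e => ⟨Equiv.ofFiberEquiv e, funext fun a => Equiv.ofFiberEquiv_map e a⟩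
  left_inv := fun p => Subtype.ext (Equiv.ext fun a => rfl)
  right_inv := fun e => funext fun w => Equiv.ext fun a => by
    obtain ⟨a, ha⟩ := a
    subst ha
    rfl

lemma perm_count {n d : ℕ} (f g : Fin n → Fin d) :
    ∑ π : Equiv.Perm (Fin n), (if f ∘ π = g then (1:ℝ) else 0)
      = if ∀ w, cnt f w = cnt g w then ∏ w, ((cnt g w).factorial : ℝ) else 0 := by
  rw [Finset.sum_boole]
  have hcard : (Finset.univ.filter fun π : Equiv.Perm (Fin n) => f ∘ π = g).card
      = Fintype.card {π : Equiv.Perm (Fin n) // f ∘ π = g} := (Fintype.card_subtype _).symm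
  rw [hcard, Fintype.card_congr (permFiberEquiv f g), Fintype.card_pi]
  by_cases h : ∀ w, cnt f w = cnt g w
  · rw [if_pos h]
    push_cast
    congr 1
    funext w
    have hc : Fintype.card {a // g a = w} = Fintype.card {a // f a = w} := by
      rw [cnt_card, cnt_card, h w]
    rw [Fintype.card_equiv (Fintype.equivOfCardEq hc), cnt_card]
  · rw [if_neg h]
    push_neg at h
    obtain ⟨w0, hw0⟩ := h
    rw [Finset.prod_eq_zero (Finset.mem_univ w0)]
    · simp
    · have : IsEmpty ({a // g a = w0} ≃ {a // f a = w0}) := by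
        constructor
        intro e
        exact hw0 (by rw [← cnt_card, ← cnt_card]; exact (Fintype.card_congr e).symm)
      exact Fintype.card_eq_zero

def pr {d j : ℕ} (u : Fin j → Fin d) : Fin (2 * j) → Fin d :=
  fun a => u ⟨a.1 / 2, by omega⟩

lemma pr_injective {d j : ℕ} : Function.Injective (pr (d := d) (j := j)) := by
  intro u u' h
  funext b
  have := congrFun h ⟨2 * b.1, by omega⟩
  simpa [pr, Nat.mul_div_cancel_left b.1 (by norm_num : 0 < 2), Fin.eta] using this

lemma idPow_pr {d j : ℕ} [NeZero d] (u : Fin j → Fin d) : idPow j (pr u) = 1 := by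
  unfold idPow
  rw [Finset.prod_eq_one]
  intro b hb
  rw [Finset.mem_range] at hb
  have h1 : 2 * b < 2 * j := by omega
  have h2 : 2 * b + 1 < 2 * j := by omega
  rw [if_pos]
  unfold tget
  rw [dif_pos h1, dif_pos h2]
  unfold pr
  congr 1
  apply Fin.ext
  simp only []
  omega

lemma paired_eq {d j : ℕ} [NeZero d] (g : Fin (2 * j) → Fin d)
    (hg : ∀ b < j, tget g (2 * b) = tget g (2 * b + 1)) :
    g = pr (fun b => g ⟨2 * b.1, by omega⟩) := by
  funext a
  unfold pr
  simp only []
  have haj : a.1 / 2 < j := by omega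
  rcases (by omega : a.1 % 2 = 0 ∨ a.1 % 2 = 1) with he | ho
  · congr 1
    apply Fin.ext
    simp only []
    omega
  · have := hg (a.1 / 2) haj
    unfold tget at this
    rw [dif_pos (by omega : 2 * (a.1 / 2) < 2 * j),
      dif_pos (by omega : 2 * (a.1 / 2) + 1 < 2 * j)] at this
    rw [this]
    congr 1
    apply Fin.ext
    simp only []
    omega

lemma idPow_eq_sum {d j : ℕ} [NeZero d] (g : Fin (2 * j) → Fin d) :
    idPow j g = ∑ u : Fin j → Fin d, if g = pr u then (1 : ℝ) else 0 := by
  by_cases h : ∃ u, g = pr u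
  · obtain ⟨u, rfl⟩ := h
    rw [idPow_pr, Finset.sum_eq_single u]
    · simp
    · intro u' _ hu'
      rw [if_neg]
      intro hc
      exact hu' (pr_injective hc).symm
    · simp
  · rw [Finset.sum_eq_zero, idPow]
    · rw [Finset.prod_eq_zero_iff]
      by_contra hc
      push_neg at hc
      apply h
      refine ⟨_, paired_eq g ?_⟩
      intro b hb
      have := hc b (Finset.mem_range.mpr hb)
      by_contra hne
      exact this (by rw [if_neg hne])
    · intro u _
      rw [if_neg]
      intro hc
      exact h ⟨u, hc⟩

lemma cnt_pr {d j : ℕ} (u : Fin j → Fin d) (w : Fin d) : cnt (pr u) w = 2 * cnt u w := by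
  unfold cnt
  rw [← Fintype.sum_equiv ((finProdFinEquiv (m := j) (n := 2)).trans (finCongr (mul_comm j 2)))
    _ (fun a => if pr u a = w then 1 else 0) (fun x => rfl)]
  rw [Fintype.sum_prod_type]
  rw [Finset.mul_sum]
  congr 1
  funext b
  rw [Fin.sum_univ_two]
  have h : ∀ r : Fin 2, pr u ((finProdFinEquiv (b, r)).cast (mul_comm j 2)) = u b := by
    intro r
    unfold pr
    congr 1
    apply Fin.ext
    have : ((finProdFinEquiv (b, r)) : ℕ) = r.1 + 2 * b.1 := rfl
    simp only [Fin.coe_cast, this]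
    omega
  show (if pr u ((finProdFinEquiv (b, 0)).cast (mul_comm j 2)) = w then 1 else 0) + (if pr u ((finProdFinEquiv (b, 1)).cast (mul_comm j 2)) = w then 1 else 0) = _
  rw [h 0, h 1]
  by_cases hw : u b = w <;> simp [hw, two_mul]

lemma cnt_cons {d j : ℕ} (w0 : Fin d) (u : Fin j → Fin d) (w : Fin d) :
    cnt (Fin.cons w0 u) w = (if w0 = w then 1 else 0) + cnt u w := by
  unfold cnt
  rw [Fin.sum_univ_succ]
  simp

lemma phi_succ (k : ℕ) : ((2 * (k + 1)).factorial : ℝ) / ((k + 1).factorial : ℝ)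
    = (4 * k + 2) * (((2 * k).factorial : ℝ) / (k.factorial : ℝ)) := by
  have h1 : 2 * (k + 1) = (2 * k + 1) + 1 := by ring
  rw [h1, Nat.factorial_succ, Nat.factorial_succ, Nat.factorial_succ]
  have hk : (k.factorial : ℝ) ≠ 0 := Nat.cast_ne_zero.mpr k.factorial_ne_zero
  field_simp
  push_cast
  ring

lemma S_lemma (d : ℕ) (j : ℕ) :
    ∑ u : Fin j → Fin d, ∏ w, (((2 * cnt u w).factorial : ℝ) / ((cnt u w).factorial : ℝ))
      = 2 ^ j * ∏ i ∈ Finset.range j, ((d : ℝ) + 2 * i) := by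
  induction j with
  | zero => simp [cnt]
  | succ j ih =>
    rw [← Fintype.sum_equiv (Fin.consEquiv (fun _ : Fin (j+1) => Fin d))
      (fun p : Fin d × (Fin j → Fin d) => ∏ w, (((2 * cnt (Fin.cons p.1 p.2) w).factorial : ℝ)
        / ((cnt (Fin.cons p.1 p.2) w).factorial : ℝ))) _ (fun p => rfl)]
    rw [Fintype.sum_prod_type, Finset.sum_comm]
    have key : ∀ (u : Fin j → Fin d) (w0 : Fin d),
        ∏ w, (((2 * cnt (Fin.cons w0 u) w).factorial : ℝ) / ((cnt (Fin.cons w0 u) w).factorial : ℝ))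
        = (4 * cnt u w0 + 2) *
          ∏ w, (((2 * cnt u w).factorial : ℝ) / ((cnt u w).factorial : ℝ)) := by
      intro u w0
      rw [Fintype.prod_eq_mul_prod_compl w0, Fintype.prod_eq_mul_prod_compl w0
        (fun w => (((2 * cnt u w).factorial : ℝ) / ((cnt u w).factorial : ℝ)))]
      have h2 : ∀ w ∈ ({w0}ᶜ : Finset (Fin d)), (((2 * cnt (Fin.cons w0 u) w).factorial : ℝ)
          / ((cnt (Fin.cons w0 u) w).factorial : ℝ))
          = (((2 * cnt u w).factorial : ℝ) / ((cnt u w).factorial : ℝ)) := by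
        intro w hw
        rw [cnt_cons, if_neg (by simpa [eq_comm] using Finset.mem_compl.mp hw), zero_add]
      rw [Finset.prod_congr rfl h2, cnt_cons, if_pos rfl]
      rw [show 1 + cnt u w0 = cnt u w0 + 1 by ring, phi_succ]
      ring
    have key2 : ∀ u : Fin j → Fin d,
        ∑ w0 : Fin d, ((4 * cnt u w0 + 2 : ℕ) : ℝ) = 4 * j + 2 * d := by
      intro u
      push_cast
      rw [Finset.sum_add_distrib, ← Finset.mul_sum]
      have : ∑ w0 : Fin d, (cnt u w0 : ℝ) = j := by
        rw [← Nat.cast_sum, sum_cnt]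
      simp [this, Finset.card_univ]
      ring
    calc ∑ u : Fin j → Fin d, ∑ w0 : Fin d,
          ∏ w, (((2 * cnt (Fin.cons w0 u) w).factorial : ℝ) / ((cnt (Fin.cons w0 u) w).factorial : ℝ))
        = ∑ u : Fin j → Fin d, (4 * j + 2 * d) *
            ∏ w, (((2 * cnt u w).factorial : ℝ) / ((cnt u w).factorial : ℝ)) := by
          apply Finset.sum_congr rfl
          intro u _
          rw [Finset.sum_congr rfl (fun w0 _ => key u w0), ← Finset.sum_mul]
          congr 1
          have := key2 u
          push_cast at this ⊢
          linarith
      _ = (4 * j + 2 * d) * (2 ^ j * ∏ i ∈ Finset.range j, ((d : ℝ) + 2 * i)) := by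
          rw [← Finset.mul_sum, ih]
      _ = 2 ^ (j + 1) * ∏ i ∈ Finset.range (j + 1), ((d : ℝ) + 2 * i) := by
          rw [Finset.prod_range_succ]
          push_cast
          ring

lemma symTensor_comp {d k : ℕ} (T : (Fin k → Fin d) → ℝ) (i : Fin k → Fin d)
    (σ : Equiv.Perm (Fin k)) : symTensor T (i ∘ σ) = symTensor T i := by
  unfold symTensor
  congr 1
  exact (Fintype.sum_equiv (Equiv.mulLeft σ)
    (fun π => T ((i ∘ σ) ∘ π)) (fun π => T (i ∘ π)) (fun π => rfl)).symm ▸ rfl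

lemma fact_two_mul (j : ℕ) :
    (2 * j).factorial = 2 ^ j * j.factorial * (2 * j - 1).doubleFactorial := by
  cases j with
  | zero => rfl
  | succ n =>
    have h1 : 2 * (n + 1) = (2 * n + 1) + 1 := by ring
    rw [h1, Nat.factorial_eq_mul_doubleFactorial,
      show (2 * n + 1) + 1 = 2 * (n + 1) by ring, Nat.doubleFactorial_two_mul,
      show 2 * (n + 1) - 1 = 2 * n + 1 by omega]

/-- `‖I^{⊛j}‖_F² = 1/ν_j^{(d)}`. -/
theorem frobenius_sq_symIdPow {d : ℕ} [NeZero d] (j : ℕ) :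
    ∑ i : Fin (2 * j) → Fin d, (symTensor (idPow j) i) ^ 2 = 1 / nuConst d j := by
  classical
  set s : (Fin (2 * j) → Fin d) → ℝ := symTensor (idPow j) with hs
  set c : ℝ := ((2 * j).factorial : ℝ) with hcdef
  have hc : c ≠ 0 := Nat.cast_ne_zero.mpr (Nat.factorial_ne_zero _)
  -- Step 1: projection property
  have step1 : ∑ i : Fin (2 * j) → Fin d, s i ^ 2
      = ∑ i : Fin (2 * j) → Fin d, s i * idPow j i := by
    have expand : ∀ i : Fin (2 * j) → Fin d, s i ^ 2
        = ∑ π : Equiv.Perm (Fin (2 * j)), (1 / c) * (s i * idPow j (i ∘ π)) := by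
      intro i
      rw [pow_two]
      calc s i * s i
          = s i * ((1 / c) * ∑ π : Equiv.Perm (Fin (2 * j)), idPow j (i ∘ π)) := rfl
        _ = ∑ π : Equiv.Perm (Fin (2 * j)), (1 / c) * (s i * idPow j (i ∘ π)) := by
            rw [Finset.mul_sum, Finset.mul_sum]
            exact Finset.sum_congr rfl fun π _ => by ring
    calc ∑ i : Fin (2 * j) → Fin d, s i ^ 2
        = ∑ i : Fin (2 * j) → Fin d, ∑ π : Equiv.Perm (Fin (2 * j)),
            (1 / c) * (s i * idPow j (i ∘ π)) := Finset.sum_congr rfl fun i _ => expand i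
      _ = ∑ π : Equiv.Perm (Fin (2 * j)), ∑ i : Fin (2 * j) → Fin d,
            (1 / c) * (s i * idPow j (i ∘ π)) := Finset.sum_comm
      _ = ∑ π : Equiv.Perm (Fin (2 * j)), ∑ i : Fin (2 * j) → Fin d,
            (1 / c) * (s i * idPow j i) := by
          apply Finset.sum_congr rfl
          intro π _
          have hbij : Function.Bijective (fun i : Fin (2 * j) → Fin d => i ∘ ⇑π) := by
            constructor
            · intro a b hab
              funext x
              have := congrFun hab (π.symm x)
              simpa using this
            · intro b
              exact ⟨b ∘ ⇑π.symm, by funext x; simp⟩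
          calc ∑ i : Fin (2 * j) → Fin d, (1 / c) * (s i * idPow j (i ∘ π))
              = ∑ i : Fin (2 * j) → Fin d, (1 / c) * (s (i ∘ π) * idPow j (i ∘ π)) :=
                Finset.sum_congr rfl fun i _ => by rw [hs, symTensor_comp]
            _ = ∑ i : Fin (2 * j) → Fin d, (1 / c) * (s i * idPow j i) :=
                Fintype.sum_bijective _ hbij _ _ (fun i => rfl)
      _ = ∑ i : Fin (2 * j) → Fin d, s i * idPow j i := by
          rw [Finset.sum_const, Finset.card_univ, Fintype.card_perm, Fintype.card_fin,
            nsmul_eq_mul, Finset.mul_sum, ← hcdef]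
          exact Finset.sum_congr rfl fun i _ => by field_simp
  -- Step 2: restrict to paired indices
  have step2 : ∑ i : Fin (2 * j) → Fin d, s i * idPow j i
      = ∑ u : Fin j → Fin d, s (pr u) := by
    calc ∑ i : Fin (2 * j) → Fin d, s i * idPow j i
        = ∑ i : Fin (2 * j) → Fin d, ∑ u : Fin j → Fin d,
            s i * (if i = pr u then (1 : ℝ) else 0) :=
          Finset.sum_congr rfl fun i _ => by rw [idPow_eq_sum, Finset.mul_sum]
      _ = ∑ u : Fin j → Fin d, ∑ i : Fin (2 * j) → Fin d,
            s i * (if i = pr u then (1 : ℝ) else 0) := Finset.sum_comm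
      _ = ∑ u : Fin j → Fin d, s (pr u) := by
          apply Finset.sum_congr rfl
          intro u _
          simp
  -- Step 3: expand s (pr u) via permutation count
  have step3 : ∀ u : Fin j → Fin d, s (pr u)
      = (1 / c) * ∑ v : Fin j → Fin d,
          (if ∀ w, cnt u w = cnt v w then ∏ w, ((2 * cnt v w).factorial : ℝ) else 0) := by
    intro u
    have h0 : s (pr u) = (1 / c) * ∑ π : Equiv.Perm (Fin (2 * j)), idPow j (pr u ∘ π) := rfl
    rw [h0]
    congr 1
    calc ∑ π : Equiv.Perm (Fin (2 * j)), idPow j (pr u ∘ π)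
        = ∑ π : Equiv.Perm (Fin (2 * j)), ∑ v : Fin j → Fin d,
            (if pr u ∘ ⇑π = pr v then (1 : ℝ) else 0) :=
          Finset.sum_congr rfl fun π _ => idPow_eq_sum _
      _ = ∑ v : Fin j → Fin d, ∑ π : Equiv.Perm (Fin (2 * j)),
            (if pr u ∘ ⇑π = pr v then (1 : ℝ) else 0) := Finset.sum_comm
      _ = ∑ v : Fin j → Fin d,
            (if ∀ w, cnt (pr u) w = cnt (pr v) w
              then ∏ w, ((cnt (pr v) w).factorial : ℝ) else 0) :=
          Finset.sum_congr rfl fun v _ => perm_count _ _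
      _ = ∑ v : Fin j → Fin d,
            (if ∀ w, cnt u w = cnt v w then ∏ w, ((2 * cnt v w).factorial : ℝ) else 0) := by
          apply Finset.sum_congr rfl
          intro v _
          simp only [cnt_pr]
          by_cases h : ∀ w, cnt u w = cnt v w
          · rw [if_pos (fun w => by rw [h w]), if_pos h]
          · rw [if_neg, if_neg h]
            intro hcon
            exact h fun w => by have := hcon w; omega
  -- Step 4: number of v with the same counts
  have count_same : ∀ v : Fin j → Fin d,
      (∑ u : Fin j → Fin d, if ∀ w, cnt u w = cnt v w then (1 : ℝ) else 0)
        * ∏ w, ((cnt v w).factorial : ℝ) = (j.factorial : ℝ) := by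
    intro v
    have h1 : (j.factorial : ℝ) = ∑ _π : Equiv.Perm (Fin j), (1 : ℝ) := by
      rw [Finset.sum_const, Finset.card_univ, Fintype.card_perm, Fintype.card_fin,
        nsmul_eq_mul, mul_one]
    rw [h1]
    symm
    have h2 : ∀ π : Equiv.Perm (Fin j), (1 : ℝ)
        = ∑ u : Fin j → Fin d, if v ∘ ⇑π = u then (1 : ℝ) else 0 := by
      intro π
      rw [Finset.sum_ite_eq]
      simp
    calc ∑ _π : Equiv.Perm (Fin j), (1 : ℝ)
        = ∑ π : Equiv.Perm (Fin j), ∑ u : Fin j → Fin d,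
            (if v ∘ ⇑π = u then (1 : ℝ) else 0) := Finset.sum_congr rfl fun π _ => h2 π
      _ = ∑ u : Fin j → Fin d, ∑ π : Equiv.Perm (Fin j),
            (if v ∘ ⇑π = u then (1 : ℝ) else 0) := Finset.sum_comm
      _ = ∑ u : Fin j → Fin d,
            (if ∀ w, cnt v w = cnt u w then ∏ w, ((cnt u w).factorial : ℝ) else 0) :=
          Finset.sum_congr rfl fun u _ => perm_count _ _
      _ = ∑ u : Fin j → Fin d,
            (if ∀ w, cnt u w = cnt v w then (1 : ℝ) else 0) * ∏ w, ((cnt v w).factorial : ℝ) := by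
          apply Finset.sum_congr rfl
          intro u _
          by_cases h : ∀ w, cnt u w = cnt v w
          · rw [if_pos (fun w => (h w).symm), if_pos h, one_mul]
            exact Finset.prod_congr rfl fun w _ => by rw [h w]
          · rw [if_neg (fun hcon => h fun w => (hcon w).symm), if_neg h, zero_mul]
      _ = (∑ u : Fin j → Fin d, if ∀ w, cnt u w = cnt v w then (1 : ℝ) else 0)
            * ∏ w, ((cnt v w).factorial : ℝ) := by rw [Finset.sum_mul]
  -- positivity facts
  have hfpos : ∀ v : Fin j → Fin d, (∏ w, ((cnt v w).factorial : ℝ)) ≠ 0 := by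
    intro v
    exact Finset.prod_ne_zero_iff.mpr fun w _ =>
      Nat.cast_ne_zero.mpr (Nat.factorial_ne_zero _)
  -- Step 5: combine
  have step5 : ∑ i : Fin (2 * j) → Fin d, s i ^ 2
      = (1 / c) * ((j.factorial : ℝ) * (2 ^ j * ∏ i ∈ Finset.range j, ((d : ℝ) + 2 * i))) := by
    rw [step1, step2]
    calc ∑ u : Fin j → Fin d, s (pr u)
        = ∑ u : Fin j → Fin d, (1 / c) * ∑ v : Fin j → Fin d,
            (if ∀ w, cnt u w = cnt v w then ∏ w, ((2 * cnt v w).factorial : ℝ) else 0) :=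
          Finset.sum_congr rfl fun u _ => step3 u
      _ = (1 / c) * ∑ u : Fin j → Fin d, ∑ v : Fin j → Fin d,
            (if ∀ w, cnt u w = cnt v w then ∏ w, ((2 * cnt v w).factorial : ℝ) else 0) := by
          rw [Finset.mul_sum]
      _ = (1 / c) * ∑ v : Fin j → Fin d, ∑ u : Fin j → Fin d,
            (if ∀ w, cnt u w = cnt v w then ∏ w, ((2 * cnt v w).factorial : ℝ) else 0) := by
          rw [Finset.sum_comm]
      _ = (1 / c) * ∑ v : Fin j → Fin d,
            (j.factorial : ℝ) * ∏ w, (((2 * cnt v w).factorial : ℝ) / ((cnt v w).factorial : ℝ)) := by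
          congr 1
          apply Finset.sum_congr rfl
          intro v _
          have e1 : ∑ u : Fin j → Fin d,
              (if ∀ w, cnt u w = cnt v w then ∏ w, ((2 * cnt v w).factorial : ℝ) else 0)
              = (∑ u : Fin j → Fin d, if ∀ w, cnt u w = cnt v w then (1 : ℝ) else 0)
                * ∏ w, ((2 * cnt v w).factorial : ℝ) := by
            rw [Finset.sum_mul]
            exact Finset.sum_congr rfl fun u _ => by
              by_cases h : ∀ w, cnt u w = cnt v w <;> simp [h]
          have h2 : (∑ u : Fin j → Fin d, if ∀ w, cnt u w = cnt v w then (1 : ℝ) else 0)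
              = (j.factorial : ℝ) / ∏ w, ((cnt v w).factorial : ℝ) :=
            (eq_div_iff (hfpos v)).mpr (count_same v)
          rw [e1, h2, Finset.prod_div_distrib, div_mul_eq_mul_div, mul_div_assoc]
      _ = (1 / c) * ((j.factorial : ℝ) * (2 ^ j * ∏ i ∈ Finset.range j, ((d : ℝ) + 2 * i))) := by
          rw [← Finset.mul_sum, S_lemma]
  rw [step5]
  -- final arithmetic
  have hd1 : (1 : ℝ) ≤ (d : ℝ) := by
    exact_mod_cast Nat.one_le_iff_ne_zero.mpr (NeZero.ne d)
  have hfac : ∀ i ∈ Finset.range j, ((d : ℝ) + 2 * i) ≠ 0 := by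
    intro i _
    positivity
  have hPne : (∏ i ∈ Finset.range j, ((d : ℝ) + 2 * i)) ≠ 0 := Finset.prod_ne_zero_iff.mpr hfac
  have hDF : ((2 * j - 1).doubleFactorial : ℝ) ≠ 0 :=
    Nat.cast_ne_zero.mpr (Nat.doubleFactorial_pos _).ne'
  rw [nuConst]
  have hinv : ∏ i ∈ Finset.range j, 1 / ((d : ℝ) + 2 * i)
      = 1 / ∏ i ∈ Finset.range j, ((d : ℝ) + 2 * i) := by
    rw [one_div, ← Finset.prod_inv_distrib]
    exact Finset.prod_congr rfl fun i _ => one_div _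
  rw [hinv]
  have hfe : c = 2 ^ j * (j.factorial : ℝ) * ((2 * j - 1).doubleFactorial : ℝ) := by
    rw [hcdef, fact_two_mul]
    push_cast
    ring
  rw [hfe]
  field_simp
end

section
/- For any symmetric rank-structured tensor, ‖sym(w^{⊗(k−2j)} ⊗ (P_w^⊥)^{⊗j})‖_F² = (1/binom(k,2j)) · ‖sym((P_w^⊥)^{⊗j})‖_F², where w ∈ S^{d−1} and P_w^⊥ = I − ww^T. -/
open Finset

def mixedTensor {d : ℕ} [NeZero d] (w : Fin d → ℝ) (P : Fin d → Fin d → ℝ) (k j : ℕ) :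
    (Fin k → Fin d) → ℝ :=
  fun i => (∏ a ∈ Finset.range (k - 2 * j), w (tget i a)) *
    ∏ b ∈ Finset.range j, P (tget i (k - 2 * j + 2 * b)) (tget i (k - 2 * j + 2 * b + 1))

open Equiv Function
open scoped Nat

/-! Write `m = k - 2j`, `B = (P_w^⊥)^{⊗j}` and `T = w^{⊗m} ⊗ B`. Expanding the square gives
`‖sym T‖² = (1/k!) Σ_τ ⟨T, T ∘ τ⟩`. If `τ` sends a slot of `w^{⊗m}` to a slot of `B`, summing over
the shared index contracts `w` against `P_w^⊥`, so the pairing vanishes. The remaining `τ` are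
`α ⊕ β`, for which `⟨T, T ∘ τ⟩ = ‖w‖^{2m} ⟨B, B ∘ β⟩ = ⟨B, B ∘ β⟩`. Hence the sum is
`m! Σ_β ⟨B, B ∘ β⟩ = m! (2j)! ‖sym B‖²`, and `m! (2j)! / k! = 1 / C(k, 2j)`. -/

theorem Fintype.sum_eq_zero_of_sum_update_eq_zero {ι α M : Type*} [Fintype ι] [DecidableEq ι]
    [Fintype α] [AddCommMonoid M] {f : (ι → α) → M} (c : ι)
    (h : ∀ i, ∑ x, f (update i c x) = 0) : ∑ i, f i = 0 := by
  rw [← (funSplitAt c α).symm.sum_comp, Fintype.sum_prod_type_right]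
  refine Finset.sum_eq_zero fun r _ => ?_
  rcases isEmpty_or_nonempty α with _ | ⟨⟨x₀⟩⟩
  · simp
  convert h ((funSplitAt c α).symm (x₀, r)) using 3 with x
  funext a
  by_cases ha : a = c
  · subst ha; simp
  · simp [ha]

theorem sum_mul_comp_perm_eq_zero {ι α : Type*} [Fintype ι] [DecidableEq ι] [Fintype α]
    (w : α → ℝ) {S T : (ι → α) → ℝ} (τ : Perm ι) (p : ι)
    (hS : ∀ i, ∑ x, w x * S (update i (τ p) x) = 0)
    (hT : ∀ i, ∃ g, ∀ x, T (update i p x) = w x * g) :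
    ∑ i, S i * T (i ∘ τ) = 0 := by
  refine Fintype.sum_eq_zero_of_sum_update_eq_zero (τ p) fun i => ?_
  obtain ⟨g, hg⟩ := hT (i ∘ τ)
  have hcomp : ∀ x, update i (τ p) x ∘ τ = update (i ∘ τ) p x := fun x => by
    rw [update_comp_equiv, symm_apply_apply]
  simp only [hcomp, hg]
  calc ∑ x, S (update i (τ p) x) * (w x * g) = (∑ x, w x * S (update i (τ p) x)) * g := by
        rw [Finset.sum_mul]; exact Finset.sum_congr rfl fun x _ => by ring
    _ = 0 := by rw [hS, zero_mul]

theorem sum_comp_perm {ι α M : Type*} [Fintype ι] [DecidableEq ι] [Fintype α] [AddCommMonoid M]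
    (f : (ι → α) → M) (π : Perm ι) : ∑ i, f (i ∘ π) = ∑ i, f i :=
  (π.symm.arrowCongr (Equiv.refl α)).sum_comp f

theorem sum_sq_symTensor {d k : ℕ} (T : (Fin k → Fin d) → ℝ) :
    ∑ i, symTensor T i ^ 2 = 1 / k ! * ∑ τ : Perm (Fin k), ∑ i, T i * T (i ∘ τ) := by
  have hpair : ∀ π σ : Perm (Fin k),
      ∑ i : Fin k → Fin d, T (i ∘ π) * T (i ∘ σ) = ∑ i, T i * T (i ∘ ⇑(π⁻¹ * σ)) := by
    intro π σ
    rw [← sum_comp_perm (fun i => T i * T (i ∘ ⇑(π⁻¹ * σ))) π]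
    simp [Perm.coe_mul, Function.comp_def]
  have hshift : ∀ π : Perm (Fin k), ∑ σ : Perm (Fin k), ∑ i : Fin k → Fin d,
      T i * T (i ∘ ⇑(π⁻¹ * σ)) = ∑ σ : Perm (Fin k), ∑ i, T i * T (i ∘ σ) := fun π =>
    Equiv.sum_comp (Equiv.mulLeft π⁻¹) (fun σ => ∑ i : Fin k → Fin d, T i * T (i ∘ σ))
  calc ∑ i, symTensor T i ^ 2
      = (1 / k !) ^ 2 * ∑ π : Perm (Fin k), ∑ σ : Perm (Fin k), ∑ i : Fin k → Fin d,
          T (i ∘ π) * T (i ∘ σ) := by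
        have hsq : ∀ i, symTensor T i ^ 2 = (1 / k !) ^ 2 * ∑ π : Perm (Fin k),
            ∑ σ : Perm (Fin k), T (i ∘ π) * T (i ∘ σ) := fun i => by
          rw [symTensor, mul_pow, sq (∑ π : Perm (Fin k), _), Finset.sum_mul_sum]
        rw [Finset.sum_congr rfl fun i _ => hsq i, ← Finset.mul_sum, Finset.sum_comm]
        exact congrArg _ (Finset.sum_congr rfl fun π _ => Finset.sum_comm)
    _ = 1 / k ! * ∑ τ : Perm (Fin k), ∑ i, T i * T (i ∘ τ) := by
        simp only [hpair, hshift, Finset.sum_const, Finset.card_univ, Fintype.card_perm,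
          Fintype.card_fin, nsmul_eq_mul]
        have : (k ! : ℝ) ≠ 0 := by positivity
        field_simp

theorem sum_prod_mul_prod_comp_perm {ι α : Type*} [Fintype ι] [DecidableEq ι] [Fintype α]
    (w : α → ℝ) (σ : Perm ι) :
    ∑ u : ι → α, (∏ a, w (u a)) * ∏ a, w (u (σ a)) = (∑ x, w x ^ 2) ^ Fintype.card ι := by
  calc ∑ u : ι → α, (∏ a, w (u a)) * ∏ a, w (u (σ a))
      = ∑ u : ι → α, ∏ a, w (u a) ^ 2 := Finset.sum_congr rfl fun u _ => by
        rw [Equiv.prod_comp σ (fun a => w (u a)), ← Finset.prod_mul_distrib]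
        simp only [sq]
    _ = ∏ _a : ι, ∑ x, w x ^ 2 := (Fintype.prod_sum fun _ x => w x ^ 2).symm
    _ = (∑ x, w x ^ 2) ^ Fintype.card ι := by rw [Finset.prod_const, Finset.card_univ]

theorem Fin.castAdd_ne_natAdd {m n : ℕ} (a : Fin m) (q : Fin n) :
    Fin.castAdd n a ≠ Fin.natAdd m q := by
  simp only [ne_eq, Fin.ext_iff, Fin.val_castAdd, Fin.val_natAdd]
  omega

section Perm

variable {m n : ℕ}

def permAppend (p : Perm (Fin m) × Perm (Fin n)) : Perm (Fin (m + n)) :=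
  finSumFinEquiv.permCongr (Perm.sumCongrHom _ _ p)

@[simp]
theorem permAppend_castAdd (p : Perm (Fin m) × Perm (Fin n)) (a : Fin m) :
    permAppend p (Fin.castAdd n a) = Fin.castAdd n (p.1 a) := by
  simp [permAppend, permCongr_apply]

@[simp]
theorem permAppend_natAdd (p : Perm (Fin m) × Perm (Fin n)) (q : Fin n) :
    permAppend p (Fin.natAdd m q) = Fin.natAdd m (p.2 q) := by
  simp [permAppend, permCongr_apply]

theorem permAppend_injective : Function.Injective (permAppend (m := m) (n := n)) :=
  (permCongr finSumFinEquiv).injective.comp Perm.sumCongrHom_injective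

theorem exists_permAppend_eq (τ : Perm (Fin (m + n)))
    (hτ : ∀ a q, τ (Fin.castAdd n a) ≠ Fin.natAdd m q) : ∃ p, permAppend p = τ := by
  set σ := (permCongr finSumFinEquiv).symm τ
  have hσ : Set.MapsTo σ (Set.range Sum.inl) (Set.range Sum.inl) := by
    rintro _ ⟨a, rfl⟩
    rcases hx : finSumFinEquiv.symm (τ (Fin.castAdd n a)) with b | q
    · exact ⟨b, by simp [σ, permCongr_apply, hx]⟩
    · exact absurd (finSumFinEquiv.symm_apply_eq.mp hx) (by simpa using hτ a q)
  obtain ⟨p, hp⟩ := Perm.mem_sumCongrHom_range_of_perm_mapsTo_inl hσ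
  exact ⟨p, by rw [permAppend, hp, apply_symm_apply]⟩

end Perm

section Tensor

variable {d : ℕ} [NeZero d]

theorem tget_of_lt {k : ℕ} (i : Fin k → Fin d) {a : ℕ} (h : a < k) : tget i a = i ⟨a, h⟩ :=
  dif_pos h

theorem tget_add {m n : ℕ} (i : Fin (m + n) → Fin d) (t : ℕ) :
    tget i (m + t) = tget (fun q => i (Fin.natAdd m q)) t := by
  by_cases ht : t < n
  · rw [tget_of_lt _ (by omega), tget_of_lt _ ht]
    rfl
  · simp only [tget, dif_neg ht, dif_neg (show ¬ m + t < m + n by omega)]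

theorem tget_update {k : ℕ} (i : Fin k → Fin d) (q : Fin k) (x : Fin d) (a : ℕ) :
    tget (update i q x) a = if a = q.val then x else tget i a := by
  by_cases ha : a < k
  · simp only [tget_of_lt _ ha, update_apply, Fin.ext_iff]
  · rw [if_neg (by omega)]
    simp only [tget, dif_neg ha]

theorem mixedTensor_add_apply (w : Fin d → ℝ) (P : Fin d → Fin d → ℝ) (m j : ℕ)
    (i : Fin (m + 2 * j) → Fin d) :
    mixedTensor w P (m + 2 * j) j i =
      (∏ a : Fin m, w (i (Fin.castAdd (2 * j) a))) *
        mixedTensor w P (2 * j) j (fun q => i (Fin.natAdd m q)) := by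
  simp only [mixedTensor, Nat.add_sub_cancel, Nat.sub_self, Finset.range_zero,
    Finset.prod_empty, one_mul, zero_add, add_assoc, tget_add]
  congr 1
  rw [← Fin.prod_univ_eq_prod_range]
  exact Finset.prod_congr rfl fun a _ => by rw [tget_of_lt _ (by omega)]; rfl

variable (w : Fin d → ℝ) (P : Fin d → Fin d → ℝ)

theorem mixedTensor_update_castAdd {m j : ℕ} (i : Fin (m + 2 * j) → Fin d) (a : Fin m) :
    ∃ g, ∀ x, mixedTensor w P (m + 2 * j) j (update i (Fin.castAdd (2 * j) a) x) = w x * g := by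
  refine ⟨(∏ a' ∈ univ \ {a}, w (i (Fin.castAdd (2 * j) a'))) *
    mixedTensor w P (2 * j) j (fun q => i (Fin.natAdd m q)), fun x => ?_⟩
  have hleft : ∀ a', w (update i (Fin.castAdd (2 * j) a) x (Fin.castAdd (2 * j) a')) =
      update (fun a' => w (i (Fin.castAdd (2 * j) a'))) a (w x) a' := fun a' => by
    simp only [update_apply, (Fin.castAdd_injective m (2 * j)).eq_iff]
    split_ifs <;> rfl
  have hright : (fun q => update i (Fin.castAdd (2 * j) a) x (Fin.natAdd m q)) =
      fun q => i (Fin.natAdd m q) :=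
    funext fun q => update_of_ne (Fin.castAdd_ne_natAdd a q).symm _ _
  rw [mixedTensor_add_apply, hright]
  simp only [hleft, Finset.prod_update_of_mem (mem_univ a)]
  ring

variable {w P}

theorem sum_mul_mixedTensor_update_eq_zero (hrow : ∀ y, ∑ x, w x * P x y = 0)
    (hcol : ∀ y, ∑ x, w x * P y x = 0) {j : ℕ} (v : Fin (2 * j) → Fin d) (q : Fin (2 * j)) :
    ∑ x, w x * mixedTensor w P (2 * j) j (update v q x) = 0 := by
  obtain ⟨b, hb⟩ := Nat.even_or_odd' q.val
  have hbj : b ∈ range j := mem_range.mpr (by omega)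
  set R := ∏ b' ∈ (range j).erase b, P (tget v (2 * b')) (tget v (2 * b' + 1))
  have hsplit : ∀ x, mixedTensor w P (2 * j) j (update v q x) =
      P (tget (update v q x) (2 * b)) (tget (update v q x) (2 * b + 1)) * R := fun x => by
    simp only [mixedTensor, Nat.sub_self, Finset.range_zero, Finset.prod_empty, one_mul,
      zero_add]
    rw [← Finset.mul_prod_erase _ _ hbj]
    congr 1
    refine Finset.prod_congr rfl fun b' hb' => ?_
    have hne : b' ≠ b := Finset.ne_of_mem_erase hb'
    rw [tget_update, tget_update, if_neg (by omega), if_neg (by omega)]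
  have hpair :
      ∑ x, w x * P (tget (update v q x) (2 * b)) (tget (update v q x) (2 * b + 1)) = 0 := by
    rcases hb with hb | hb
    · simp only [tget_update, hb, if_true, if_neg (show 2 * b + 1 ≠ 2 * b by omega)]
      exact hrow _
    · simp only [tget_update, hb, if_true, if_neg (show 2 * b ≠ 2 * b + 1 by omega)]
      exact hcol _
  calc ∑ x, w x * mixedTensor w P (2 * j) j (update v q x)
      = (∑ x, w x * P (tget (update v q x) (2 * b)) (tget (update v q x) (2 * b + 1))) * R := by
        rw [Finset.sum_mul]
        exact Finset.sum_congr rfl fun x _ => by rw [hsplit, mul_assoc]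
    _ = 0 := by rw [hpair, zero_mul]

theorem sum_mul_mixedTensor_update_natAdd_eq_zero (hrow : ∀ y, ∑ x, w x * P x y = 0)
    (hcol : ∀ y, ∑ x, w x * P y x = 0) {m j : ℕ} (i : Fin (m + 2 * j) → Fin d)
    (q : Fin (2 * j)) :
    ∑ x, w x * mixedTensor w P (m + 2 * j) j (update i (Fin.natAdd m q) x) = 0 := by
  have hleft : ∀ x a, update i (Fin.natAdd m q) x (Fin.castAdd (2 * j) a) =
      i (Fin.castAdd (2 * j) a) := fun x a => update_of_ne (Fin.castAdd_ne_natAdd a q) _ _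
  have hright : ∀ x, (fun q' => update i (Fin.natAdd m q) x (Fin.natAdd m q')) =
      update (fun q' => i (Fin.natAdd m q')) q x := fun x =>
    update_comp_eq_of_injective i (Fin.natAdd_injective (2 * j) m) q x
  simp only [mixedTensor_add_apply, hleft, hright, mul_left_comm (w _), ← Finset.mul_sum,
    sum_mul_mixedTensor_update_eq_zero hrow hcol, mul_zero]

end Tensor

section Pairing

variable {d : ℕ} [NeZero d] {w : Fin d → ℝ} {P : Fin d → Fin d → ℝ} {m j : ℕ}

theorem sum_mixedTensor_mul_comp_permAppend (hw : ∑ x, w x ^ 2 = 1)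
    (p : Perm (Fin m) × Perm (Fin (2 * j))) :
    ∑ i, mixedTensor w P (m + 2 * j) j i * mixedTensor w P (m + 2 * j) j (i ∘ permAppend p) =
      ∑ v, mixedTensor w P (2 * j) j v * mixedTensor w P (2 * j) j (v ∘ p.2) := by
  rw [← (Fin.appendEquiv m (2 * j)).sum_comp, Fintype.sum_prod_type]
  simp only [Fin.appendEquiv_apply, mixedTensor_add_apply, comp_apply, permAppend_castAdd,
    permAppend_natAdd, Fin.append_left, Fin.append_right]
  have hW := sum_prod_mul_prod_comp_perm w p.1
  rw [hw, one_pow] at hW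
  rw [← one_mul (∑ v : Fin (2 * j) → Fin d, _), ← hW, Finset.sum_mul_sum]
  refine Finset.sum_congr rfl fun u _ => Finset.sum_congr rfl fun v _ => ?_
  simp only [Function.comp_def]
  ring

theorem sum_mixedTensor_mul_comp_eq_zero (hrow : ∀ y, ∑ x, w x * P x y = 0)
    (hcol : ∀ y, ∑ x, w x * P y x = 0) (τ : Perm (Fin (m + 2 * j)))
    (hτ : ∀ p, permAppend p ≠ τ) :
    ∑ i, mixedTensor w P (m + 2 * j) j i * mixedTensor w P (m + 2 * j) j (i ∘ τ) = 0 := by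
  obtain ⟨a, q, haq⟩ : ∃ a q, τ (Fin.castAdd (2 * j) a) = Fin.natAdd m q := by
    by_contra! h
    obtain ⟨p, hp⟩ := exists_permAppend_eq τ h
    exact hτ p hp
  refine sum_mul_comp_perm_eq_zero w τ (Fin.castAdd (2 * j) a) (fun i => ?_)
    (fun i => mixedTensor_update_castAdd w P i a)
  rw [haq]
  exact sum_mul_mixedTensor_update_natAdd_eq_zero hrow hcol i q

theorem sum_perm_sum_mixedTensor_mul_comp (hw : ∑ x, w x ^ 2 = 1)
    (hrow : ∀ y, ∑ x, w x * P x y = 0) (hcol : ∀ y, ∑ x, w x * P y x = 0) :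
    ∑ τ : Perm (Fin (m + 2 * j)), ∑ i,
        mixedTensor w P (m + 2 * j) j i * mixedTensor w P (m + 2 * j) j (i ∘ τ) =
      m ! * ∑ σ : Perm (Fin (2 * j)), ∑ v,
        mixedTensor w P (2 * j) j v * mixedTensor w P (2 * j) j (v ∘ σ) := by
  rw [← Fintype.sum_of_injective permAppend permAppend_injective _ _
    (fun τ hτ => sum_mixedTensor_mul_comp_eq_zero hrow hcol τ (by simpa using hτ))
    (fun p => (sum_mixedTensor_mul_comp_permAppend hw p).symm),
    Fintype.sum_prod_type]
  simp only [Finset.sum_const, Finset.card_univ, Fintype.card_perm, Fintype.card_fin,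
    nsmul_eq_mul]

end Pairing

theorem sum_mul_projection_left {d : ℕ} {w : Fin d → ℝ} (hw : ∑ x, w x ^ 2 = 1) (y : Fin d) :
    ∑ x, w x * ((if x = y then (1 : ℝ) else 0) - w x * w y) = 0 := by
  simp only [mul_sub, mul_ite, mul_one, mul_zero, Finset.sum_sub_distrib, Finset.sum_ite_eq',
    Finset.mem_univ, if_true, ← mul_assoc, ← sq, ← Finset.sum_mul, hw, one_mul, sub_self]

theorem sum_mul_projection_right {d : ℕ} {w : Fin d → ℝ} (hw : ∑ x, w x ^ 2 = 1) (y : Fin d) :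
    ∑ x, w x * ((if y = x then (1 : ℝ) else 0) - w y * w x) = 0 := by
  simpa only [eq_comm, mul_comm (w y)] using sum_mul_projection_left hw y

/-- `‖sym(w^{⊗(k−2j)} ⊗ (P_w^⊥)^{⊗j})‖_F² = (1/C(k,2j)) ‖sym((P_w^⊥)^{⊗j})‖_F²`
for a unit vector `w`, where `P_w^⊥ = I − ww^T`. -/
theorem sym_mixed_frobenius {d k j : ℕ} [NeZero d] (hj : 2 * j ≤ k)
    (w : Fin d → ℝ) (hw : ∑ i, w i ^ 2 = 1) :
    ∑ i : Fin k → Fin d,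
        (symTensor (mixedTensor w
          (fun a b => (if a = b then (1 : ℝ) else 0) - w a * w b) k j) i) ^ 2 =
      (1 / (k.choose (2 * j) : ℝ)) *
        ∑ i : Fin (2 * j) → Fin d,
          (symTensor (mixedTensor w
            (fun a b => (if a = b then (1 : ℝ) else 0) - w a * w b) (2 * j) j) i) ^ 2 := by
  obtain ⟨m, rfl⟩ := Nat.exists_eq_add_of_le' hj
  rw [sum_sq_symTensor, sum_sq_symTensor, sum_perm_sum_mixedTensor_mul_comp hw
    (sum_mul_projection_left hw) (sum_mul_projection_right hw)]
  have hfact : ((m + 2 * j).choose (2 * j) : ℝ) * m ! * (2 * j)! = (m + 2 * j)! := by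
    exact_mod_cast Nat.add_choose_mul_factorial_mul_factorial m (2 * j)
  have : ((m + 2 * j).choose (2 * j) : ℝ) ≠ 0 := by
    exact_mod_cast (Nat.choose_pos (Nat.le_add_left (2 * j) m)).ne'
  field_simp
  rw [← hfact]
  ring
end

section
/- (Log-corrected Hölder for polynomial tails) Let X, Y be nonnegative random variables with ‖Y‖_p ≤ σ_Y p^C for all p ≥ 2. Then E[XY] ≤ ‖X‖_1 · σ_Y · (2e)^C · max(1, (1/C)·log(‖X‖_2/‖X‖_1))^C. -/
open MeasureTheory

/-! Hölder's inequality with exponents `1/(1-ε), 2/ε, 2/ε`, applied to `XY = X^(1-ε) X^ε Y`, gives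
`E[XY] ≤ ‖X‖₁^(1-ε) ‖X‖₂^ε ‖Y‖_(2/ε)`. Take `ε = 1/M` with `M = max 1 (log (‖X‖₂/‖X‖₁) / C)`:
then `‖Y‖_(2M) ≤ σ_Y (2M)^C` by hypothesis and `(‖X‖₂/‖X‖₁)^(1/M) ≤ e^C`, so
`‖X‖₁^(1-ε) ‖X‖₂^ε = ‖X‖₁ (‖X‖₂/‖X‖₁)^ε ≤ ‖X‖₁ e^C`. -/

theorem lintegral_enorm_mul_le_eLpNorm_interpolate {α E F : Type*} [MeasurableSpace α]
    {μ : Measure α} [TopologicalSpace E] [ContinuousENorm E] [TopologicalSpace F]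
    [ContinuousENorm F] {f : α → E} {g : α → F}
    (hf : AEStronglyMeasurable f μ) (hg : AEStronglyMeasurable g μ) {ε : ℝ} (hε₀ : 0 < ε)
    (hε₁ : ε ≤ 1) :
    ∫⁻ a, ‖f a‖ₑ * ‖g a‖ₑ ∂μ ≤
      eLpNorm f 1 μ ^ (1 - ε) * eLpNorm f 2 μ ^ ε * eLpNorm g (ENNReal.ofReal (2 / ε)) μ := by
  have holder := ENNReal.lintegral_prod_norm_pow_le (μ := μ) Finset.univ
    (f := ![fun a ↦ ‖f a‖ₑ, fun a ↦ ‖f a‖ₑ ^ (2 : ℝ), fun a ↦ ‖g a‖ₑ ^ (2 / ε)])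
    (p := ![1 - ε, ε / 2, ε / 2])
    (by simp [Fin.forall_fin_succ, hf.enorm, hf.enorm.pow_const, hg.enorm.pow_const (2 / ε)])
    (by
      simp only [Fin.sum_univ_three, Matrix.cons_val_zero, Matrix.cons_val_one, Matrix.cons_val]
      ring)
    (by
      simp only [Finset.mem_univ, forall_const, Fin.forall_fin_succ, Matrix.cons_val_zero,
        Matrix.cons_val_succ, Matrix.cons_val_fin_one, sub_nonneg, hε₁, true_and, and_self]
      positivity)
  simp only [Fin.prod_univ_three, Matrix.cons_val_zero, Matrix.cons_val_one, Matrix.cons_val_two,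
    Matrix.head_cons, Matrix.tail_cons] at holder
  have hp : ENNReal.ofReal (2 / ε) ≠ 0 := (ENNReal.ofReal_pos.mpr (by positivity)).ne'
  rw [eLpNorm_one_eq_lintegral_enorm,
    eLpNorm_eq_lintegral_rpow_enorm_toReal two_ne_zero ENNReal.ofNat_ne_top,
    eLpNorm_eq_lintegral_rpow_enorm_toReal hp ENNReal.ofReal_ne_top,
    ENNReal.toReal_ofReal (by positivity), ENNReal.toReal_ofNat, ← ENNReal.rpow_mul, one_div_div]
  calc ∫⁻ a, ‖f a‖ₑ * ‖g a‖ₑ ∂μ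
      = ∫⁻ a, ‖f a‖ₑ ^ (1 - ε) * (‖f a‖ₑ ^ (2 : ℝ)) ^ (ε / 2) * (‖g a‖ₑ ^ (2 / ε)) ^ (ε / 2) ∂μ := by
        refine lintegral_congr fun a ↦ ?_
        have hg_exp : 2 / ε * (ε / 2) = 1 := by field_simp
        rw [← ENNReal.rpow_mul, ← ENNReal.rpow_mul, mul_div_cancel₀ ε two_ne_zero, hg_exp,
          ← ENNReal.rpow_add_of_nonneg (1 - ε) ε (by linarith) hε₀.le, sub_add_cancel,
          ENNReal.rpow_one, ENNReal.rpow_one]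
    _ ≤ _ := holder
    _ = _ := by rw [one_div_mul_eq_div]

theorem integral_le_toReal_lintegral_enorm {α : Type*} [MeasurableSpace α] {μ : Measure α}
    (f : α → ℝ) : ∫ a, f a ∂μ ≤ (∫⁻ a, ‖f a‖ₑ ∂μ).toReal := by
  simpa only [ofReal_norm] using (le_abs_self _).trans (norm_integral_le_lintegral_norm f)

theorem Real.rpow_one_sub_mul_rpow_le_mul_exp {a b ε c : ℝ} (ha : 0 < a) (hb : 0 ≤ b)
    (hε : 0 < ε) (h : ε * Real.log (b / a) ≤ c) : a ^ (1 - ε) * b ^ ε ≤ a * Real.exp c := by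
  obtain rfl | hb := hb.eq_or_lt
  · rw [Real.zero_rpow hε.ne', mul_zero]
    positivity
  calc a ^ (1 - ε) * b ^ ε = a * (b / a) ^ ε := by
        rw [Real.rpow_sub ha, Real.rpow_one, Real.div_rpow hb.le ha.le]
        field_simp
    _ = a * Real.exp (ε * Real.log (b / a)) := by
        rw [Real.rpow_def_of_pos (div_pos hb ha), mul_comm ε]
    _ ≤ a * Real.exp c := by gcongr

theorem integral_mul_le_interpolate {α : Type*} [MeasurableSpace α] {μ : Measure α}
    [IsFiniteMeasure μ] {X Y : α → ℝ} (hXpos : ∀ a, 0 ≤ X a) (hX2 : MemLp X 2 μ)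
    (hY : AEStronglyMeasurable Y μ) {ε t : ℝ} (hε₀ : 0 < ε) (hε₁ : ε ≤ 1) (ht : 0 ≤ t)
    (hYt : eLpNorm Y (ENNReal.ofReal (2 / ε)) μ ≤ ENNReal.ofReal t) :
    ∫ a, X a * Y a ∂μ ≤
      (∫ a, X a ∂μ) ^ (1 - ε) * ((∫ a, X a ^ 2 ∂μ) ^ ((1 : ℝ) / 2)) ^ ε * t := by
  have hX1 : eLpNorm X 1 μ = ENNReal.ofReal (∫ a, X a ∂μ) := by
    rw [eLpNorm_one_eq_lintegral_enorm,
      ← ofReal_integral_norm_eq_lintegral_enorm (hX2.integrable one_le_two)]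
    simp [Real.norm_of_nonneg (hXpos _)]
  have hX2' : eLpNorm X 2 μ = ENNReal.ofReal ((∫ a, X a ^ 2 ∂μ) ^ ((1 : ℝ) / 2)) := by
    rw [hX2.eLpNorm_eq_integral_rpow_norm two_ne_zero ENNReal.ofNat_ne_top]
    simp
  have hA : 0 ≤ ∫ a, X a ∂μ := integral_nonneg hXpos
  have hB : 0 ≤ (∫ a, X a ^ 2 ∂μ) ^ ((1 : ℝ) / 2) := by positivity
  refine (integral_le_toReal_lintegral_enorm fun a ↦ X a * Y a).trans
    (ENNReal.toReal_le_of_le_ofReal (by positivity) ?_)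
  calc ∫⁻ a, ‖X a * Y a‖ₑ ∂μ = ∫⁻ a, ‖X a‖ₑ * ‖Y a‖ₑ ∂μ := by simp only [enorm_mul]
    _ ≤ eLpNorm X 1 μ ^ (1 - ε) * eLpNorm X 2 μ ^ ε * eLpNorm Y (ENNReal.ofReal (2 / ε)) μ :=
        lintegral_enorm_mul_le_eLpNorm_interpolate hX2.1 hY hε₀ hε₁
    _ ≤ ENNReal.ofReal (∫ a, X a ∂μ) ^ (1 - ε) *
          ENNReal.ofReal ((∫ a, X a ^ 2 ∂μ) ^ ((1 : ℝ) / 2)) ^ ε * ENNReal.ofReal t := by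
        rw [hX1, hX2']
        gcongr
    _ = _ := by
        rw [ENNReal.ofReal_rpow_of_nonneg hA (by linarith), ENNReal.ofReal_rpow_of_nonneg hB hε₀.le,
          ← ENNReal.ofReal_mul (by positivity), ← ENNReal.ofReal_mul (by positivity)]

theorem log_corrected_holder_general {Ω : Type*} [MeasurableSpace Ω] (μ : Measure Ω)
    [IsProbabilityMeasure μ] (X Y : Ω → ℝ) (hYm : Measurable Y)
    (hXpos : ∀ ω, 0 ≤ X ω)
    (hX2 : MemLp X 2 μ) (C σY : ℝ) (hC : 0 < C) (hσ : 0 < σY)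
    (hmom : ∀ p : ℝ, 2 ≤ p →
      eLpNorm Y (ENNReal.ofReal p) μ ≤ ENNReal.ofReal (σY * p ^ C)) :
    ∫ ω, X ω * Y ω ∂μ ≤
      (∫ ω, X ω ∂μ) * σY * (2 * Real.exp 1) ^ C *
        (max 1 ((1 / C) *
          Real.log ((∫ ω, X ω ^ 2 ∂μ) ^ ((1 : ℝ) / 2) / ∫ ω, X ω ∂μ))) ^ C := by
  set A := ∫ ω, X ω ∂μ
  set B := (∫ ω, X ω ^ 2 ∂μ) ^ ((1 : ℝ) / 2)
  set M := max 1 ((1 / C) * Real.log (B / A))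
  obtain hA0 | hApos := (show 0 ≤ A from integral_nonneg hXpos).eq_or_lt
  · have hX0 : X =ᵐ[μ] 0 :=
      (integral_eq_zero_iff_of_nonneg hXpos (hX2.integrable one_le_two)).mp hA0.symm
    rw [integral_congr_ae (hX0.mono fun ω h ↦ by simp [h] : (fun ω ↦ X ω * Y ω) =ᵐ[μ] 0),
      ← hA0]
    simp
  have hM : 1 ≤ M := le_max_left _ _
  have hlog : M⁻¹ * Real.log (B / A) ≤ C := by
    rw [inv_mul_le_iff₀ (by positivity), ← div_le_iff₀ hC, ← one_div_mul_eq_div]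
    exact le_max_right _ _
  have hY : eLpNorm Y (ENNReal.ofReal (2 / M⁻¹)) μ ≤ ENNReal.ofReal (σY * (2 * M) ^ C) := by
    rw [div_inv_eq_mul]
    exact hmom _ (by linarith)
  calc ∫ ω, X ω * Y ω ∂μ ≤ A ^ (1 - M⁻¹) * B ^ M⁻¹ * (σY * (2 * M) ^ C) :=
        integral_mul_le_interpolate hXpos hX2 hYm.aestronglyMeasurable (by positivity)
          (inv_le_one_of_one_le₀ hM) (by positivity) hY
    _ ≤ A * Real.exp C * (σY * (2 * M) ^ C) := by
        refine mul_le_mul_of_nonneg_right ?_ (by positivity)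
        exact Real.rpow_one_sub_mul_rpow_le_mul_exp hApos (by positivity) (by positivity) hlog
    _ = A * σY * (2 * Real.exp 1) ^ C * M ^ C := by
        rw [Real.mul_rpow zero_le_two (by positivity), Real.mul_rpow zero_le_two (by positivity),
          Real.exp_one_rpow]
        ring

/-- Log-corrected Hölder for polynomial tails: if `‖Y‖_p ≤ σ_Y p^C` for all `p ≥ 2`, then
`E[XY] ≤ ‖X‖_1 σ_Y (2e)^C max(1, (1/C) log(‖X‖_2/‖X‖_1))^C`. -/
theorem log_corrected_holder {Ω : Type*} [MeasurableSpace Ω] (μ : Measure Ω)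
    [IsProbabilityMeasure μ] (X Y : Ω → ℝ) (hXm : Measurable X) (hYm : Measurable Y)
    (hXpos : ∀ ω, 0 ≤ X ω) (hYpos : ∀ ω, 0 ≤ Y ω)
    (hX2 : MemLp X 2 μ) (C σY : ℝ) (hC : 0 < C) (hσ : 0 < σY)
    (hmom : ∀ p : ℝ, 2 ≤ p →
      eLpNorm Y (ENNReal.ofReal p) μ ≤ ENNReal.ofReal (σY * p ^ C)) :
    ∫ ω, X ω * Y ω ∂μ ≤
      (∫ ω, X ω ∂μ) * σY * (2 * Real.exp 1) ^ C *
        (max 1 ((1 / C) *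
          Real.log ((∫ ω, X ω ^ 2 ∂μ) ^ ((1 : ℝ) / 2) / ∫ ω, X ω ∂μ))) ^ C :=
  log_corrected_holder_general μ X Y hYm hXpos hX2 C σY hC hσ hmom
end

section
/- (Discrete Grönwall-type blowup lower bound) Let η, a_0 > 0, k ≥ 2 an integer, and let (u_t) be a nonnegative sequence satisfying u_t ≥ a_0 + η Σ_{s=0}^{t−1} u_s^k for all t. If max_{0≤s≤t−1} η u_s^{k−1} ≤ (log 2)/k, then u_t ≥ (a_0^{−(k−1)} − (1/2)η(k−1)t)^{−1/(k−1)} (whenever the quantity in parentheses is positive). -/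
/-- Auxiliary comparison sequence `w 0 = a₀`, `w (t+1) = w t + η (w t)^k`. -/
def gronwallW (η a₀ : ℝ) (k : ℕ) : ℕ → ℝ
  | 0 => a₀
  | t + 1 => gronwallW η a₀ k t + η * (gronwallW η a₀ k t) ^ k

/-- Discrete Grönwall-type blowup lower bound: if `u_t ≥ a_0 + η Σ_{s<t} u_s^k` and
`η u_s^{k-1} ≤ (log 2)/k` for all `s < t`, then
`u_t ≥ (a_0^{−(k−1)} − (1/2)η(k−1)t)^{−1/(k−1)}` when the base is positive. -/
theorem discrete_gronwall_blowup (η a₀ : ℝ) (hη : 0 < η) (ha : 0 < a₀)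
    (k : ℕ) (hk : 2 ≤ k) (u : ℕ → ℝ) (hu : ∀ t, 0 ≤ u t)
    (hrec : ∀ t, a₀ + η * ∑ s ∈ Finset.range t, u s ^ k ≤ u t)
    (t : ℕ) (hmax : ∀ s < t, η * u s ^ (k - 1) ≤ Real.log 2 / k)
    (hpos : 0 < a₀ ^ (-((k : ℝ) - 1)) - (1 / 2) * η * ((k : ℝ) - 1) * t) :
    (a₀ ^ (-((k : ℝ) - 1)) - (1 / 2) * η * ((k : ℝ) - 1) * t) ^ (-(1 / ((k : ℝ) - 1))) ≤
      u t := by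
  set w := gronwallW η a₀ k with hw
  set n := k - 1 with hn
  have hkn : n + 1 = k := by omega
  have hncast : (n : ℝ) = (k : ℝ) - 1 := by
    rw [hn, Nat.cast_sub (by omega : 1 ≤ k)]; norm_num
  have hn1 : 1 ≤ n := by omega
  -- positivity of w
  have hwpos : ∀ s, 0 < w s := by
    intro s
    induction s with
    | zero => exact ha
    | succ s ih =>
      have h0 : 0 ≤ η * w s ^ k := by positivity
      show 0 < w s + η * w s ^ k
      linarith
  -- closed form
  have hwsum : ∀ s, w s = a₀ + η * ∑ r ∈ Finset.range s, w r ^ k := by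
    intro s
    induction s with
    | zero => simp [hw, gronwallW]
    | succ s ih =>
      rw [Finset.sum_range_succ]
      show w s + η * w s ^ k = _
      rw [ih]; ring
  -- comparison w ≤ u
  have hwu : ∀ s, w s ≤ u s := by
    intro s
    induction s using Nat.strong_induction_on with
    | _ s ih =>
      calc w s = a₀ + η * ∑ r ∈ Finset.range s, w r ^ k := hwsum s
        _ ≤ a₀ + η * ∑ r ∈ Finset.range s, u r ^ k := by
            gcongr with r hr
            · exact (hwpos r).le
            · exact ih r (Finset.mem_range.mp hr)
        _ ≤ u s := hrec s
  -- the key step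
  have hstep : ∀ s < t, 1 / w (s + 1) ^ n ≤ 1 / w s ^ n - η * n / 2 := by
    intro s hs
    set W := w s with hW
    have hWpos : 0 < W := hwpos s
    set δ : ℝ := η * W ^ n with hδdef
    have hδ0 : 0 ≤ δ := by positivity
    have hδle : δ ≤ Real.log 2 / k := by
      refine le_trans ?_ (hmax s hs)
      have hWn : W ^ n ≤ u s ^ n := pow_le_pow_left₀ hWpos.le (hwu s) n
      rw [hδdef]
      exact mul_le_mul_of_nonneg_left hWn hη.le
    have hkpos : (0 : ℝ) < k := by positivity
    have hkδ : (k : ℝ) * δ ≤ Real.log 2 := by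
      calc (k : ℝ) * δ ≤ (k : ℝ) * (Real.log 2 / k) := by gcongr
        _ = Real.log 2 := by field_simp
    have h1δ : (1 : ℝ) ≤ 1 + δ := by linarith
    have h2 : (1 + δ) ^ k ≤ 2 := by
      have h1 : (1 + δ) ^ k ≤ Real.exp δ ^ k :=
        pow_le_pow_left₀ (by linarith) (by linarith [Real.add_one_le_exp δ]) k
      have h2' : Real.exp δ ^ k = Real.exp ((k : ℝ) * δ) := by
        rw [← Real.exp_nat_mul]
      have h3 : Real.exp ((k : ℝ) * δ) ≤ Real.exp (Real.log 2) := Real.exp_le_exp.mpr hkδ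
      rw [Real.exp_log (by norm_num : (0:ℝ) < 2)] at h3
      calc (1+δ)^k ≤ Real.exp δ ^ k := h1
        _ = Real.exp ((k:ℝ)*δ) := h2'
        _ ≤ 2 := h3
    have hEk : (1 + δ) ^ n ≤ 2 := le_trans (pow_le_pow_right₀ h1δ (by omega)) h2
    have hbern : 1 + (n : ℝ) * δ ≤ (1 + δ) ^ n := one_add_mul_le_pow (by linarith) n
    have hnδ1 : (n : ℝ) * δ ≤ 1 := by
      have hlog : Real.log 2 ≤ 1 := by
        calc Real.log 2 ≤ 2 - 1 := Real.log_le_sub_one_of_pos (by norm_num)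
          _ = 1 := by norm_num
      have hnk : (n : ℝ) ≤ (k : ℝ) := by rw [hncast]; linarith
      calc (n:ℝ) * δ ≤ (k:ℝ) * δ := by gcongr
        _ ≤ Real.log 2 := hkδ
        _ ≤ 1 := hlog
    -- w (s+1) = W * (1 + δ)
    have hws : w (s + 1) = W * (1 + δ) := by
      show W + η * W ^ k = W * (1 + δ)
      rw [← hkn, pow_succ, hδdef]
      ring
    set P := W ^ n with hP
    have hPpos : 0 < P := by positivity
    set E := (1 + δ) ^ n with hE
    have hEpos : 0 < E := by positivity
    rw [hws, mul_pow, ← hP, ← hE]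
    rw [div_le_iff₀ (by positivity : (0:ℝ) < P * E)]
    have hexp : (1 / P - η * (n:ℝ) / 2) * (P * E) = E - (n:ℝ) * δ / 2 * E := by
      rw [hδdef]; field_simp
    rw [hexp]
    have hfac : 0 ≤ 1 - (n:ℝ) * δ / 2 := by linarith
    nlinarith [mul_le_mul_of_nonneg_right hbern hfac,
      mul_nonneg (mul_nonneg (Nat.cast_nonneg n : (0:ℝ) ≤ n) hδ0) (by linarith : (0:ℝ) ≤ 1 - (n:ℝ)*δ)]
  -- induction
  have hind : ∀ s, s ≤ t → 1 / w s ^ n ≤ 1 / a₀ ^ n - η * n / 2 * s := by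
    intro s
    induction s with
    | zero => intro _; simp [hw, gronwallW]
    | succ s ih =>
      intro hst
      have h1 := hstep s (by omega)
      have h2 := ih (by omega)
      push_cast
      linarith
  -- assemble
  have hm1 : (1:ℝ) ≤ (k:ℝ) - 1 := by rw [← hncast]; exact_mod_cast hn1
  have hm0 : ((k:ℝ) - 1) ≠ 0 := by linarith
  have ha' : a₀ ^ (-((k:ℝ)-1)) = 1 / a₀ ^ n := by
    rw [← hncast, Real.rpow_neg ha.le, Real.rpow_natCast, one_div]
  have hwt : w t ^ (-((k:ℝ)-1)) = 1 / (w t) ^ n := by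
    rw [← hncast, Real.rpow_neg (hwpos t).le, Real.rpow_natCast, one_div]
  have hX : w t ^ (-((k:ℝ)-1)) ≤ a₀ ^ (-((k:ℝ)-1)) - (1/2) * η * ((k:ℝ)-1) * t := by
    rw [hwt, ha', ← hncast]
    have := hind t le_rfl
    linarith
  have hz : (-(1 / ((k:ℝ)-1))) ≤ 0 := by
    have : 0 < 1 / ((k:ℝ)-1) := by positivity
    linarith
  have hwtpos : 0 < w t ^ (-((k:ℝ)-1)) := Real.rpow_pos_of_pos (hwpos t) _
  calc (a₀ ^ (-((k:ℝ)-1)) - (1/2) * η * ((k:ℝ)-1) * t) ^ (-(1 / ((k:ℝ)-1)))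
      ≤ (w t ^ (-((k:ℝ)-1))) ^ (-(1 / ((k:ℝ)-1))) :=
        Real.rpow_le_rpow_of_nonpos hwtpos hX hz
    _ = w t := by
        rw [← Real.rpow_mul (hwpos t).le]
        have : (-((k:ℝ)-1)) * (-(1 / ((k:ℝ)-1))) = 1 := by field_simp
        rw [this, Real.rpow_one]
    _ ≤ u t := hwu t
end
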